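/- Suppose additionally that c k ≠ 0 for every k, and fix L with 1 ≤ L ≤ K − 1. Let μ < 1 satisfy f_l^L(μ) = 0, let ν < 1 satisfy f_u^L(ν) = 0, and let λ* < 1 satisfy g(λ*) = 0. Then μ ≤ λ* ≤ ν. -/
import Mathlib

open Finset

/-- Strict monotonicity in the variable of the secular-type sum. -/
lemma secular_sum_strict_mono (M : ℕ) (w t : Fin (M + 2) → ℝ)
    (hw : ∀ k, 0 < w k) (ht : ∀ k, 1 ≤ t k)
    {x y : ℝ} (hxy : x < y) (hy : y < 1) :
    ∑ k, w k / (t k - x) ^ 2 < ∑ k, w k / (t k - y) ^ 2 := by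
  apply Finset.sum_lt_sum_of_nonempty univ_nonempty
  intro k _
  have h1 : y < t k := lt_of_lt_of_le hy (ht k)
  have h2 : 0 < t k - y := by linarith
  have h3 : 0 < t k - x := by linarith
  have hden : (t k - y) ^ 2 < (t k - x) ^ 2 := by nlinarith
  exact div_lt_div_of_pos_left (hw k) (by positivity) hden

/-- Comparison of secular-type sums for pointwise comparable shifts. -/
lemma secular_sum_mono_den (M : ℕ) (w t t' : Fin (M + 2) → ℝ)
    (hw : ∀ k, 0 ≤ w k) (ht : ∀ k, 1 ≤ t k) (htt : ∀ k, t k ≤ t' k)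
    {x : ℝ} (hx : x < 1) :
    ∑ k, w k / (t' k - x) ^ 2 ≤ ∑ k, w k / (t k - x) ^ 2 := by
  apply Finset.sum_le_sum
  intro k _
  have h2 : 0 < t k - x := by have := ht k; linarith
  have hden : (t k - x) ^ 2 ≤ (t' k - x) ^ 2 := by nlinarith [htt k]
  exact div_le_div_of_nonneg_left (hw k) (by positivity) hden

lemma secular_split (M L : ℕ) (s c : Fin (M + 2) → ℝ) (t0 x : ℝ) :
    (∑ k ∈ Finset.univ.filter (fun k : Fin (M + 2) => (k : ℕ) < L),
        (c k) ^ 2 / (s k - x) ^ 2)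
      + (∑ k ∈ Finset.univ.filter (fun k : Fin (M + 2) => L ≤ (k : ℕ)), (c k) ^ 2)
          / (t0 - x) ^ 2
    = ∑ k, (c k) ^ 2 / ((if (k : ℕ) < L then s k else t0) - x) ^ 2 := by
  rw [Finset.sum_div]
  rw [← Finset.sum_filter_add_sum_filter_not univ (fun k : Fin (M + 2) => (k : ℕ) < L)
    (fun k => (c k) ^ 2 / ((if (k : ℕ) < L then s k else t0) - x) ^ 2)]
  congr 1
  · exact Finset.sum_congr rfl fun k hk => by
      rw [if_pos (by simpa using hk)]
  · rw [show (Finset.univ.filter (fun k : Fin (M + 2) => L ≤ (k : ℕ)))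
        = Finset.univ.filter (fun k : Fin (M + 2) => ¬ (k : ℕ) < L) by
      simp [not_lt]]
    exact Finset.sum_congr rfl fun k hk => by
      rw [if_neg (by simpa using hk)]

/-- Lemma 5 of the paper: with all `c k` nonzero and `1 ≤ L ≤ K - 1`, if `μ < 1` is a
zero of the lower truncated secular function `f_l^L`, `ν < 1` is a zero of the upper
truncated secular function `f_u^L`, and `λ* < 1` is a zero of the full secular
function `g`, then `μ ≤ λ* ≤ ν`. -/
theorem truncated_secular_roots_bracket (M : ℕ) (s c : Fin (M + 2) → ℝ)
    (hs : Monotone s) (hs0 : s 0 = 1)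
    (hc : ∑ k, (c k) ^ 2 = 1) (hcne : ∀ k, c k ≠ 0)
    (L : ℕ) (hL1 : 1 ≤ L) (hL2 : L ≤ M + 1)
    (mu nu lam : ℝ) (hmu : mu < 1) (hnu : nu < 1) (hlam : lam < 1)
    (hfl : 1 - (∑ k ∈ Finset.univ.filter (fun k : Fin (M + 2) => (k : ℕ) < L),
            (c k) ^ 2 / (s k - mu) ^ 2)
        - (∑ k ∈ Finset.univ.filter (fun k : Fin (M + 2) => L ≤ (k : ℕ)), (c k) ^ 2)
            / (s ⟨L, by omega⟩ - mu) ^ 2 = 0)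
    (hfu : 1 - (∑ k ∈ Finset.univ.filter (fun k : Fin (M + 2) => (k : ℕ) < L),
            (c k) ^ 2 / (s k - nu) ^ 2)
        - (∑ k ∈ Finset.univ.filter (fun k : Fin (M + 2) => L ≤ (k : ℕ)), (c k) ^ 2)
            / (s (Fin.last (M + 1)) - nu) ^ 2 = 0)
    (hg : 1 - ∑ k, (c k) ^ 2 / (lam - s k) ^ 2 = 0) :
    mu ≤ lam ∧ lam ≤ nu := by
  have hs1 : ∀ k, (1 : ℝ) ≤ s k := fun k => hs0 ▸ hs (Fin.zero_le k)
  set tl : Fin (M + 2) → ℝ := fun k => if (k : ℕ) < L then s k else s ⟨L, by omega⟩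
    with htl
  set tu : Fin (M + 2) → ℝ := fun k => if (k : ℕ) < L then s k else s (Fin.last (M + 1))
    with htu
  have hwpos : ∀ k, 0 < (c k) ^ 2 := fun k => by
    have := hcne k; positivity
  have htl1 : ∀ k, (1 : ℝ) ≤ tl k := fun k => by
    simp only [htl]; split <;> exact hs1 _
  have htu1 : ∀ k, (1 : ℝ) ≤ tu k := fun k => by
    simp only [htu]; split <;> exact hs1 _
  have htls : ∀ k, tl k ≤ s k := fun k => by
    simp only [htl]; split
    · exact le_rfl
    · exact hs (by simpa [Fin.le_def] using not_lt.mp (by assumption))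
  have hstu : ∀ k, s k ≤ tu k := fun k => by
    simp only [htu]; split
    · exact le_rfl
    · exact hs (Fin.le_last k)
  -- rewrite hypotheses as sum equalities
  have hg' : ∑ k, (c k) ^ 2 / (s k - lam) ^ 2 = 1 := by
    have : ∑ k, (c k) ^ 2 / (lam - s k) ^ 2 = ∑ k, (c k) ^ 2 / (s k - lam) ^ 2 :=
      Finset.sum_congr rfl fun k _ => by rw [show (lam - s k) ^ 2 = (s k - lam) ^ 2 by ring]
    linarith [hg, this]
  have hfl' : ∑ k, (c k) ^ 2 / (tl k - mu) ^ 2 = 1 := by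
    rw [← secular_split M L s c (s ⟨L, by omega⟩) mu]; linarith [hfl]
  have hfu' : ∑ k, (c k) ^ 2 / (tu k - nu) ^ 2 = 1 := by
    rw [← secular_split M L s c (s (Fin.last (M + 1))) nu]; linarith [hfu]
  constructor
  · by_contra h
    push_neg at h
    have h1 : ∑ k, (c k) ^ 2 / (tl k - lam) ^ 2 < ∑ k, (c k) ^ 2 / (tl k - mu) ^ 2 :=
      secular_sum_strict_mono M _ tl hwpos htl1 h hmu
    have h2 : ∑ k, (c k) ^ 2 / (s k - lam) ^ 2 ≤ ∑ k, (c k) ^ 2 / (tl k - lam) ^ 2 :=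
      secular_sum_mono_den M _ tl s (fun k => (hwpos k).le) htl1 htls hlam
    rw [hg'] at h2; rw [hfl'] at h1; linarith
  · by_contra h
    push_neg at h
    have h1 : ∑ k, (c k) ^ 2 / (tu k - nu) ^ 2 < ∑ k, (c k) ^ 2 / (tu k - lam) ^ 2 :=
      secular_sum_strict_mono M _ tu hwpos htu1 h hlam
    have h2 : ∑ k, (c k) ^ 2 / (tu k - lam) ^ 2 ≤ ∑ k, (c k) ^ 2 / (s k - lam) ^ 2 :=
      secular_sum_mono_den M _ s tu (fun k => (hwpos k).le) hs1 hstu hlam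
    rw [hg'] at h2; rw [hfu'] at h1; linarith
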